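/- For each fixed β ∈ (0, 1/2) there exists a positive real constant d₃ such that ( (1/R²) · 4π·∫₁^{R_β(R)} ρ²/√(ρ²−1) dρ ) / ( E(R)^{1−2β} / |log E(R)| ) → d₃ as R → ∞. In particular, any E(R)^β-Lipschitz two-valued graph which agrees with the catenoid outside the disk of radius R_β(R) must miss a portion of the catenoid of scale-invariant area comparable to E^{1−2β}/|log E|. -/

import Mathlib

/-!
The primitive `G ρ = (ρ √(ρ² - 1) + arcosh ρ) / 2` (`catArea`) of `ρ² / √(ρ² - 1)` vanishes
at `1`, and the excess integrand equals `2ρ² / √(ρ² - 1) - 2ρ`, so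
`π R² E(R) / 4 = 2 G(R) - (R² - 1) = log R + log 2 + 1/2 + o(1)`.
Hence `R² E ~ (4/π) log R`, so `E → 0⁺` and `|log E| ~ 2 log R`, i.e.
`|log E| / (R² E) → π/2`.
Since `R_β² = 1 + E^(-2β) → ∞` and `G ρ ~ ρ² / 2`, also `G(R_β) E^(2β) → 1/2`.
The quotient in question is `4π · G(R_β) E^(2β) · |log E| / (R² E)`, which tends to `π²`.
-/

open MeasureTheory Filter

/-- The scale-invariant cylindrical tilt-excess of the 2-dimensional catenoid
`{(x,y,z) : √(x²+y²) = cosh z}` in the cylinder of radius `R`, relative to the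
horizontal plane `{z = 0}`. -/
noncomputable def catExcess (R : ℝ) : ℝ :=
  (4 / (Real.pi * R ^ 2)) *
    ∫ ρ in (1:ℝ)..R, ρ * (2 - 2 * Real.sqrt (ρ ^ 2 - 1) / ρ) * (ρ / Real.sqrt (ρ ^ 2 - 1))

/-- The radius `R_β(R)`, determined by `1/√(R_β² − 1) = E(R)^β`,
i.e. `R_β = √(1 + E(R)^(−2β))`. -/
noncomputable def Rbeta (β R : ℝ) : ℝ :=
  Real.sqrt (1 + catExcess R ^ (-(2 * β)))

open Real Set Topology

noncomputable def catArea (ρ : ℝ) : ℝ :=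
  (ρ * √(ρ ^ 2 - 1) + arcosh ρ) / 2

lemma hasDerivAt_catArea {ρ : ℝ} (hρ : 1 < ρ) :
    HasDerivAt catArea (ρ ^ 2 / √(ρ ^ 2 - 1)) ρ := by
  have hpos : 0 < ρ ^ 2 - 1 := by nlinarith
  have hsqrt : HasDerivAt (fun x => √(x ^ 2 - 1)) (ρ / √(ρ ^ 2 - 1)) ρ := by
    convert ((hasDerivAt_pow 2 ρ).sub_const 1).sqrt hpos.ne' using 1
    field_simp
    ring
  refine ((((hasDerivAt_id ρ).mul hsqrt).add (hasDerivAt_arcosh hρ)).div_const 2).congr_deriv ?_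
  have hs : 0 < √(ρ ^ 2 - 1) := sqrt_pos.2 hpos
  simp only [id]
  field_simp
  rw [sq_sqrt hpos.le]
  ring

lemma continuousOn_catArea : ContinuousOn catArea (Ici 1) := by
  have : Continuous fun ρ : ℝ => ρ * √(ρ ^ 2 - 1) := by fun_prop
  exact (this.continuousOn.add continuousOn_arcosh).div_const 2

lemma intervalIntegrable_sq_div_sqrt_sq_sub_one {R : ℝ} (hR : 1 ≤ R) :
    IntervalIntegrable (fun ρ => ρ ^ 2 / √(ρ ^ 2 - 1)) volume 1 R := by
  refine intervalIntegral.intervalIntegrable_deriv_of_nonneg (g := catArea) ?_ (fun x hx => ?_)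
    (fun x _ => ?_)
  · exact continuousOn_catArea.mono (uIcc_of_le hR ▸ Icc_subset_Ici_self)
  · exact hasDerivAt_catArea (by simpa [hR] using hx.1)
  · positivity

lemma integral_sq_div_sqrt_sq_sub_one {R : ℝ} (hR : 1 ≤ R) :
    ∫ ρ in (1:ℝ)..R, ρ ^ 2 / √(ρ ^ 2 - 1) = catArea R := by
  rw [intervalIntegral.integral_eq_sub_of_hasDerivAt_of_le hR
    (continuousOn_catArea.mono Icc_subset_Ici_self) (fun x hx => hasDerivAt_catArea hx.1)
    (intervalIntegrable_sq_div_sqrt_sq_sub_one hR)]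
  simp [catArea]

lemma catExcess_eq {R : ℝ} (hR : 1 ≤ R) :
    catExcess R = 4 / (π * R ^ 2) * (2 * catArea R - (R ^ 2 - 1)) := by
  have hintegrand : EqOn (fun ρ => ρ * (2 - 2 * √(ρ ^ 2 - 1) / ρ) * (ρ / √(ρ ^ 2 - 1)))
      (fun ρ => 2 * (ρ ^ 2 / √(ρ ^ 2 - 1)) - 2 * ρ) (Ioo 1 R) := by
    intro x hx
    have hx1 : 1 < x := hx.1
    have hs : 0 < √(x ^ 2 - 1) := sqrt_pos.2 (by nlinarith)
    field_simp
  rw [catExcess, intervalIntegral.integral_congr_Ioo_of_le hR hintegrand,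
    intervalIntegral.integral_sub ((intervalIntegrable_sq_div_sqrt_sq_sub_one hR).const_mul 2)
      (intervalIntegral.intervalIntegrable_id.const_mul 2), intervalIntegral.integral_const_mul,
    intervalIntegral.integral_const_mul, integral_sq_div_sqrt_sq_sub_one hR, integral_id]
  ring

lemma tendsto_sqrt_sq_sub_one_div_self :
    Tendsto (fun R => √(R ^ 2 - 1) / R) atTop (𝓝 1) := by
  have hinv : Tendsto (fun R : ℝ => (R ^ 2)⁻¹) atTop (𝓝 0) :=
    (tendsto_pow_atTop two_ne_zero).inv_tendsto_atTop
  have h := ((tendsto_const_nhds (x := (1:ℝ))).sub hinv).sqrt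
  rw [sub_zero, sqrt_one] at h
  refine h.congr' ?_
  filter_upwards [eventually_gt_atTop 0] with R hR
  rw [← sqrt_sq hR.le, ← sqrt_div' _ (sq_nonneg R), sqrt_sq hR.le, sub_div,
    div_self (by positivity), one_div]

lemma tendsto_two_mul_catArea_sub_sub_log :
    Tendsto (fun R => 2 * catArea R - (R ^ 2 - 1) - log R) atTop (𝓝 (log 2 + 1 / 2)) := by
  -- with `q R = √(R² - 1) / R → 1`: `arcosh R = log R + log (1 + q R)` and
  -- `R √(R² - 1) - R² = -1 / (1 + q R)`
  set q : ℝ → ℝ := fun R => √(R ^ 2 - 1) / R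
  have hq : Tendsto (fun R => 1 + q R) atTop (𝓝 2) := by
    simpa [one_add_one_eq_two] using tendsto_sqrt_sq_sub_one_div_self.const_add 1
  have hlim := ((hq.log two_ne_zero).add_const 1).sub (hq.inv₀ two_ne_zero)
  rw [show log 2 + 1 - 2⁻¹ = log 2 + 1 / 2 by ring] at hlim
  refine hlim.congr' ?_
  filter_upwards [eventually_gt_atTop 1] with R hR
  have hR0 : 0 < R := by linarith
  have hs_sq : √(R ^ 2 - 1) ^ 2 = R ^ 2 - 1 := sq_sqrt (by nlinarith)
  have hsplit : R + √(R ^ 2 - 1) = R * (1 + q R) := by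
    simp only [q]; field_simp
  have harcosh : arcosh R = log R + log (1 + q R) := by
    rw [arcosh, hsplit, log_mul hR0.ne' (by positivity)]
  have hinv : (1 + q R)⁻¹ = R / (R + √(R ^ 2 - 1)) := by
    rw [hsplit]; field_simp
  rw [catArea, harcosh, hinv]
  field_simp
  linear_combination (-R) * hs_sq

lemma tendsto_log_div_sq_atTop : Tendsto (fun x => log x / x ^ 2) atTop (𝓝 0) := by
  simpa only [rpow_two] using (isLittleO_log_rpow_atTop two_pos).tendsto_div_nhds_zero

lemma tendsto_catArea_div_sq : Tendsto (fun ρ => catArea ρ / ρ ^ 2) atTop (𝓝 (1 / 2)) := by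
  have hrem := (tendsto_two_mul_catArea_sub_sub_log.sub_const 1).div_atTop
    (tendsto_pow_atTop two_ne_zero)
  have hlim := ((hrem.add tendsto_log_div_sq_atTop).add_const 1).div_const 2
  rw [zero_add, zero_add] at hlim
  refine hlim.congr' ?_
  filter_upwards [eventually_gt_atTop 0] with ρ hρ
  field_simp
  ring

lemma tendsto_sq_mul_catExcess_div_log :
    Tendsto (fun R => R ^ 2 * catExcess R / log R) atTop (𝓝 (4 / π)) := by
  have hrem := tendsto_two_mul_catArea_sub_sub_log.div_atTop tendsto_log_atTop
  have hlim := (hrem.const_add 1).const_mul (4 / π)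
  rw [add_zero, mul_one] at hlim
  refine hlim.congr' ?_
  filter_upwards [eventually_gt_atTop 1] with R hR
  have hlog : 0 < log R := log_pos hR
  have hR0 : 0 < R := by linarith
  rw [catExcess_eq hR.le]
  field_simp
  ring

lemma tendsto_sq_mul_catExcess_atTop : Tendsto (fun R => R ^ 2 * catExcess R) atTop atTop := by
  refine (tendsto_sq_mul_catExcess_div_log.pos_mul_atTop (by positivity)
    tendsto_log_atTop).congr' ?_
  filter_upwards [eventually_gt_atTop 1] with R hR
  have hlog : 0 < log R := log_pos hR
  field_simp

lemma tendsto_catExcess_nhdsGT_zero : Tendsto catExcess atTop (𝓝[>] 0) := by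
  have hlim := tendsto_sq_mul_catExcess_div_log.mul tendsto_log_div_sq_atTop
  rw [mul_zero] at hlim
  refine tendsto_nhdsWithin_iff.2 ⟨hlim.congr' ?_, ?_⟩
  · filter_upwards [eventually_gt_atTop 1] with R hR
    have hlog : 0 < log R := log_pos hR
    have hR0 : 0 < R := by linarith
    field_simp
  · filter_upwards [tendsto_sq_mul_catExcess_atTop.eventually_gt_atTop 0] with R hR
    exact pos_of_mul_pos_right hR (sq_nonneg R)

lemma tendsto_abs_log_catExcess_div :
    Tendsto (fun R => |log (catExcess R)| / (R ^ 2 * catExcess R)) atTop (𝓝 (π / 2)) := by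
  have hlogR : Tendsto (fun R => log R / (R ^ 2 * catExcess R)) atTop (𝓝 (π / 4)) := by
    simpa only [inv_div] using tendsto_sq_mul_catExcess_div_log.inv₀ (by positivity)
  have hlogP :
      Tendsto (fun R => log (R ^ 2 * catExcess R) / (R ^ 2 * catExcess R)) atTop (𝓝 0) :=
    isLittleO_log_id_atTop.tendsto_div_nhds_zero.comp tendsto_sq_mul_catExcess_atTop
  have hlim := (hlogR.const_mul 2).sub hlogP
  rw [sub_zero, show 2 * (π / 4) = π / 2 by ring] at hlim
  refine hlim.congr' ?_
  have hE := tendsto_catExcess_nhdsGT_zero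
  filter_upwards [eventually_gt_atTop 0, hE (Ioo_mem_nhdsGT zero_lt_one)] with R hR ⟨hE0, hE1⟩
  rw [abs_of_neg (log_neg hE0 hE1), log_mul (by positivity) hE0.ne', log_pow]
  field_simp
  push_cast
  ring

lemma tendsto_catExcess_rpow_neg_atTop {β : ℝ} (hβ : 0 < β) :
    Tendsto (fun R => catExcess R ^ (-(2 * β))) atTop atTop :=
  (tendsto_rpow_neg_nhdsGT_zero (by linarith)).comp tendsto_catExcess_nhdsGT_zero

lemma tendsto_Rbeta_atTop {β : ℝ} (hβ : 0 < β) : Tendsto (Rbeta β) atTop atTop :=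
  tendsto_sqrt_atTop.comp (tendsto_atTop_add_const_left _ 1 (tendsto_catExcess_rpow_neg_atTop hβ))

lemma tendsto_Rbeta_sq_mul_catExcess_rpow {β : ℝ} (hβ : 0 < β) :
    Tendsto (fun R => Rbeta β R ^ 2 * catExcess R ^ (2 * β)) atTop (𝓝 1) := by
  have hlim := (tendsto_catExcess_rpow_neg_atTop hβ).inv_tendsto_atTop.const_add 1
  rw [add_zero] at hlim
  refine hlim.congr' ?_
  filter_upwards [tendsto_catExcess_nhdsGT_zero self_mem_nhdsWithin] with R (hE : 0 < catExcess R)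
  have ht : 0 < catExcess R ^ (2 * β) := rpow_pos_of_pos hE _
  rw [Pi.inv_apply, Rbeta, sq_sqrt (by positivity), rpow_neg hE.le]
  field_simp
  ring

lemma tendsto_catArea_Rbeta_mul_rpow {β : ℝ} (hβ : 0 < β) :
    Tendsto (fun R => catArea (Rbeta β R) * catExcess R ^ (2 * β)) atTop (𝓝 (1 / 2)) := by
  have hlim := ((tendsto_catArea_div_sq.comp (tendsto_Rbeta_atTop hβ)).mul
    (tendsto_Rbeta_sq_mul_catExcess_rpow hβ))
  rw [mul_one] at hlim
  refine hlim.congr' ?_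
  filter_upwards [(tendsto_Rbeta_atTop hβ).eventually_gt_atTop 0] with R hR
  simp only [Function.comp]
  field_simp

/-- For each fixed `β ∈ (0,1/2)` there is a positive constant `d₃` such that the
scale-invariant area `(1/R²)·4π·∫₁^{R_β} ρ²/√(ρ²−1) dρ` of the portion of the catenoid
over the disk of radius `R_β(R)`, divided by `E(R)^{1−2β}/|log E(R)|`, tends to `d₃`
as `R → ∞`. -/
theorem catenoid_missed_area_asymptotics (β : ℝ) (hβ : β ∈ Set.Ioo (0:ℝ) (1/2)) :
    ∃ d₃ : ℝ, 0 < d₃ ∧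
      Tendsto
        (fun R : ℝ =>
          ((1 / R ^ 2) * (4 * Real.pi * ∫ ρ in (1:ℝ)..(Rbeta β R), ρ ^ 2 / Real.sqrt (ρ ^ 2 - 1))) /
            (catExcess R ^ (1 - 2 * β) / |Real.log (catExcess R)|))
        atTop (nhds d₃) := by
  refine ⟨π ^ 2, by positivity, ?_⟩
  have hlim := ((tendsto_catArea_Rbeta_mul_rpow hβ.1).mul tendsto_abs_log_catExcess_div).const_mul
    (4 * π)
  rw [show 4 * π * (1 / 2 * (π / 2)) = π ^ 2 by ring] at hlim
  refine hlim.congr' ?_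
  have hE := tendsto_catExcess_nhdsGT_zero
  filter_upwards [eventually_gt_atTop 0, hE (Ioo_mem_nhdsGT zero_lt_one),
    (tendsto_Rbeta_atTop hβ.1).eventually_ge_atTop 1] with R hR ⟨hE0, hE1⟩ hRβ
  have hlog : 0 < |log (catExcess R)| := abs_pos.2 (log_neg hE0 hE1).ne
  have hrpow : 0 < catExcess R ^ (2 * β) := rpow_pos_of_pos hE0 _
  rw [integral_sq_div_sqrt_sq_sub_one hRβ, rpow_sub hE0, rpow_one]
  field_simp
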